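/- Let m and n be positive coprime integers. Then the number N of rational Dyck words with m letters U and n letters R satisfies (m+n)·N = C(m+n, n), i.e. N = (1/(m+n))·binomial(m+n, n). -/

import Mathlib

/-!
Cycle lemma. Read a word with `m` letters `U` and `n` letters `R` cyclically and give it the
height `b * n - a * m` after a prefix with `b` letters `U` and `a` letters `R`. The height after
`k` letters is congruent to `-k * m` modulo `m + n`, so when `m` and `n` are coprime the heights
after `0, …, m + n - 1` letters are pairwise distinct. Since the total height is `0`, the rotation
starting at the position of minimal height is the only one whose heights stay nonnegative, i.e.
the only rational Dyck word among the `m + n` rotations, which are pairwise distinct. Hence the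
`(m + n).choose n` words fall into classes of size `m + n`, each containing one Dyck word.
-/

/-- A word in the alphabet `{U, R}` (encoded as `Bool`, with `true` = `U` and
`false` = `R`) is a *rational Dyck word* for slope `m/n` if every prefix with
`b` letters `U` and `a` letters `R` satisfies `b * n ≥ a * m`. -/
def IsRationalDyckWord (m n : ℕ) (w : List Bool) : Prop :=
  ∀ k : ℕ, ((w.take k).count true) * n ≥ ((w.take k).count false) * m

open Finset Fin.NatCast

namespace RationalDyck

theorem count_ofFn {α : Type*} [DecidableEq α] {N : ℕ} (f : Fin N → α) (a : α) :
    (List.ofFn f).count a = #{i | f i = a} := by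
  rw [← List.Vector.toList_ofFn, ← Fin.card_filter_univ_eq_vector_get_eq_count]
  simp only [List.Vector.get_ofFn]

theorem card_filter_count_false_ofFn (N k : ℕ) :
    #{f : Fin N → Bool | (List.ofFn f).count false = k} = N.choose k := by
  simp_rw [count_ofFn]
  trans #(powersetCard k (univ : Finset (Fin N)))
  · refine card_nbij' (fun f => ({i | f i = false} : Finset (Fin N)))
      (fun s i => decide (i ∉ s)) ?_ ?_ ?_ ?_
    · intro f hf; simp_all [mem_powersetCard]
    · intro s hs; simp_all [mem_powersetCard]
    · intro f _; funext i; cases h : f i <;> simp [h]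
    · intro s _; ext i; simp
  · simp

def step (m n : ℕ) (b : Bool) : ℤ := cond b n (-m)

theorem sum_map_step (m n : ℕ) (w : List Bool) :
    (w.map (step m n)).sum = w.count true * n - w.count false * m := by
  induction w with
  | nil => simp
  | cons b w ih => cases b <;> simp [ih, step] <;> ring

section Rotate

variable {N : ℕ}

def rotate {α : Type*} (j : Fin N) (f : Fin N → α) : Fin N → α :=
  fun i => f (i + j)

theorem rotate_zero [NeZero N] {α : Type*} (f : Fin N → α) : rotate 0 f = f := by
  funext i; simp [rotate]

theorem rotate_rotate {α : Type*} (j j' : Fin N) (f : Fin N → α) :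
    rotate j (rotate j' f) = rotate (j + j') f := by
  funext i; simp [rotate, add_assoc]

theorem count_ofFn_rotate [NeZero N] {α : Type*} [DecidableEq α] (j : Fin N) (f : Fin N → α) (a : α) :
    (List.ofFn (rotate j f)).count a = (List.ofFn f).count a :=
  ((Equiv.addRight j).ofFn_comp_perm f).count_eq a

theorem card_eq_mul_card_of_existsUnique_rotate [NeZero N] {α : Type*} {A D : Finset (Fin N → α)}
    (hDA : D ⊆ A) (hA : ∀ f ∈ A, ∀ j, rotate j f ∈ A) (hD : ∀ f ∈ A, ∃! j, rotate j f ∈ D) :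
    #A = N * #D := by
  have hcard : #(D ×ˢ (univ : Finset (Fin N))) = N * #D := by simp [mul_comm]
  rw [← hcard]
  symm
  refine card_bij (fun p _ => rotate p.2 p.1) (fun p hp => hA _ (hDA (mem_product.1 hp).1) _)
    ?_ ?_
  · rintro ⟨f, j⟩ hf ⟨f', j'⟩ hf' h
    simp only [mem_product, mem_univ, and_true] at hf hf' h
    have hff' : rotate (j - j') f = f' := by
      rw [sub_eq_neg_add, ← rotate_rotate, h, rotate_rotate, neg_add_cancel, rotate_zero]
    have hjj' : j - j' = 0 :=
      (hD f (hDA hf)).unique (hff' ▸ hf') ((rotate_zero f).symm ▸ hf)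
    rw [hjj', rotate_zero] at hff'
    rw [sub_eq_zero.1 hjj', hff']
  · intro g hg
    obtain ⟨j, hj, -⟩ := hD g hg
    exact ⟨(rotate j g, -j), mem_product.2 ⟨hj, mem_univ _⟩, by
      rw [rotate_rotate, neg_add_cancel, rotate_zero]⟩

end Rotate

variable {N : ℕ} [NeZero N] {m n : ℕ}

-- `f i` casts `i : ℕ` to `Fin N`, i.e. reduces it modulo `N`: the word is read periodically.
def height (m n : ℕ) (f : Fin N → Bool) (k : ℕ) : ℤ :=
  ∑ i ∈ range k, step m n (f i)

theorem height_eq_sum_map_take (f : Fin N → Bool) {k : ℕ} (hk : k ≤ N) :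
    height m n f k = (((List.ofFn f).take k).map (step m n)).sum := by
  induction k with
  | zero => simp [height]
  | succ k ih =>
    have hkN : k < N := hk
    have hcast : ((k : ℕ) : Fin N) = ⟨k, hkN⟩ := Fin.ext (Nat.mod_eq_of_lt hkN)
    rw [height, sum_range_succ, ← height, ih hkN.le, List.take_add_one,
      List.getElem?_ofFn]
    simp [hkN, hcast]

theorem height_eq_zero_of_count (f : Fin N → Bool) (htrue : (List.ofFn f).count true = m)
    (hfalse : (List.ofFn f).count false = n) : height m n f N = 0 := by
  rw [height_eq_sum_map_take f le_rfl, List.take_of_length_le (by simp), sum_map_step,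
    htrue, hfalse]
  ring

theorem height_add (f : Fin N → Bool) (j k : ℕ) :
    height m n f (j + k) = height m n f j + height m n (rotate (j : Fin N) f) k := by
  simp only [height, sum_range_add, rotate, Nat.cast_add, add_comm (j : Fin N)]

theorem height_periodic (f : Fin N → Bool) (hf : height m n f N = 0) :
    Function.Periodic (height m n f) N := by
  intro k
  rw [add_comm, height_add, hf, Fin.natCast_self, rotate_zero, zero_add]

theorem height_val_natCast (f : Fin N → Bool) (hf : height m n f N = 0) (k : ℕ) :
    height m n f (k : Fin N) = height m n f k := by
  rw [Fin.val_natCast, (height_periodic f hf).map_mod_nat]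

theorem isRationalDyckWord_ofFn_iff (f : Fin N → Bool) :
    IsRationalDyckWord m n (List.ofFn f) ↔ ∀ k ≤ N, 0 ≤ height m n f k := by
  have key : ∀ k ≤ N, (0 ≤ height m n f k ↔ ((List.ofFn f).take k).count false * m ≤
      ((List.ofFn f).take k).count true * n) := by
    intro k hk
    rw [height_eq_sum_map_take f hk, sum_map_step, sub_nonneg]
    norm_cast
  refine ⟨fun h k hk => (key k hk).2 (h k), fun h k => ?_⟩
  obtain hk | hk := le_total k N
  · exact (key k hk).1 (h k hk)
  · have := (key N le_rfl).1 (h N le_rfl)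
    rwa [List.take_of_length_le (by simp), ← List.take_of_length_le (l := List.ofFn f) (i := k)
      (by simpa using hk)] at this

theorem isRationalDyckWord_rotate_iff (f : Fin N → Bool) (hf : height m n f N = 0)
    (j : Fin N) :
    IsRationalDyckWord m n (List.ofFn (rotate j f)) ↔
      ∀ t : Fin N, height m n f j ≤ height m n f t := by
  have hshift : ∀ k, height m n (rotate j f) k =
      height m n f ((j + k : ℕ) : Fin N) - height m n f j := by
    intro k
    rw [height_val_natCast f hf, height_add, Fin.cast_val_eq_self]
    ring
  simp only [isRationalDyckWord_ofFn_iff, hshift, sub_nonneg]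
  refine ⟨fun h t => ?_, fun h k _ => h _⟩
  simpa using h ((t - j : Fin N) : ℕ) (t - j).is_lt.le

theorem natCast_add_dvd_height_add_mul (f : Fin N → Bool) (k : ℕ) :
    ((m + n : ℕ) : ℤ) ∣ height m n f k + k * m := by
  have : height m n f k + k * m = ∑ i ∈ range k, (step m n (f i) + m) := by
    simp [height, sum_add_distrib]
  rw [this]
  refine dvd_sum fun i _ => ?_
  cases f i <;> simp [step, add_comm]

theorem height_injective (f : Fin N → Bool) (hN : m + n = N) (hmn : m.Coprime n) :
    Function.Injective fun t : Fin N => height m n f t := by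
  intro t t' h
  have hdvd : (N : ℤ) ∣ (t - t' : ℤ) * m := by
    have := dvd_sub (natCast_add_dvd_height_add_mul (m := m) (n := n) f t)
      (natCast_add_dvd_height_add_mul f t')
    simp only at h
    rwa [hN, h, add_sub_add_left_eq_sub, ← sub_mul] at this
  have hcop : IsCoprime (N : ℤ) m :=
    Nat.isCoprime_iff_coprime.mpr (hN ▸ (Nat.coprime_self_add_right.mpr hmn).symm)
  have := Int.eq_zero_of_abs_lt_dvd (hcop.dvd_of_dvd_mul_right hdvd)
    (abs_sub_lt_iff.mpr ⟨by omega, by omega⟩)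
  exact Fin.ext (by omega)

theorem existsUnique_isRationalDyckWord_rotate (f : Fin N → Bool) (hN : m + n = N)
    (hmn : m.Coprime n) (hf : height m n f N = 0) :
    ∃! j : Fin N, IsRationalDyckWord m n (List.ofFn (rotate j f)) := by
  simp only [isRationalDyckWord_rotate_iff f hf]
  obtain ⟨j, hj⟩ := Finite.exists_min fun t : Fin N => height m n f t
  exact ⟨j, hj, fun j' hj' => height_injective f hN hmn (le_antisymm (hj' j) (hj j'))⟩

end RationalDyck

open RationalDyck

open Classical in
theorem card_rationalDyckWords_general (m n : ℕ)
    (hmn : Nat.Coprime m n) :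
    (m + n) *
      (Finset.univ.filter (fun f : Fin (m + n) → Bool =>
        (List.ofFn f).count true = m ∧ (List.ofFn f).count false = n ∧
          IsRationalDyckWord m n (List.ofFn f))).card
      = Nat.choose (m + n) n := by
  have : NeZero (m + n) := ⟨fun h => by
    obtain ⟨rfl, rfl⟩ := Nat.add_eq_zero_iff.1 h
    exact absurd hmn (by decide)⟩
  have hcount_true : ∀ f : Fin (m + n) → Bool,
      (List.ofFn f).count false = n → (List.ofFn f).count true = m := fun f h => by
    have := List.count_true_add_count_false (List.ofFn f)
    rw [List.length_ofFn] at this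
    omega
  rw [← card_filter_count_false_ofFn]
  refine (card_eq_mul_card_of_existsUnique_rotate ?_ ?_ ?_).symm
  · exact fun f hf => mem_filter.2 ⟨mem_univ f, (mem_filter.1 hf).2.2.1⟩
  · intro f hf j
    simpa [count_ofFn_rotate] using hf
  · intro f hf
    have hfalse := (mem_filter.1 hf).2
    have htrue := hcount_true f hfalse
    simpa [count_ofFn_rotate, htrue, hfalse] using
      existsUnique_isRationalDyckWord_rotate f rfl hmn (height_eq_zero_of_count f htrue hfalse)

open Classical in
/-- For positive coprime `m`, `n`, the number `N` of rational Dyck words with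
`m` letters `U` and `n` letters `R` satisfies `(m + n) * N = (m + n).choose n`,
i.e. `N = 1/(m+n) * binomial (m+n) n`. -/
theorem card_rationalDyckWords (m n : ℕ) (hm : 0 < m) (hn : 0 < n)
    (hmn : Nat.Coprime m n) :
    (m + n) *
      (Finset.univ.filter (fun f : Fin (m + n) → Bool =>
        (List.ofFn f).count true = m ∧ (List.ofFn f).count false = n ∧
          IsRationalDyckWord m n (List.ofFn f))).card
      = Nat.choose (m + n) n :=
  card_rationalDyckWords_general m n hmn
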